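/- Let α ∈ (0,1) and let X be an ℕ-valued random variable satisfying the recursive distributional equation. Then there exists ε > 0 such that for all s ∈ (0, ε), G(s) = Q₊(s) = (1/2)((2−p)s + p + √(((2−p)s + p)² − 4s·exp(α(s−1)))). -/

import Mathlib

open scoped ENNReal

/-- The Poisson(α) probability mass function on ℕ. -/
noncomputable def poissonPMF (α : ℝ) (k : ℕ) : ℝ≥0∞ :=
  ENNReal.ofReal (Real.exp (-α) * α ^ k / (Nat.factorial k))

/-- The Geometric(1/2) pmf: P(N = k) = (1/2)^(k+1) for k ≥ 0. -/
noncomputable def geomHalf (k : ℕ) : ℝ≥0∞ := (1 / 2) ^ (k + 1)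

/-- The law of (X - 1)⁺ when X has law μ on ℕ. -/
noncomputable def shiftLaw (μ : ℕ → ℝ≥0∞) (k : ℕ) : ℝ≥0∞ :=
  if k = 0 then μ 0 + μ 1 else μ (k + 1)

/-- Convolution of two (sub-)pmfs on ℕ: the law of an independent sum. -/
noncomputable def convAdd (f g : ℕ → ℝ≥0∞) (k : ℕ) : ℝ≥0∞ :=
  ∑ j ∈ Finset.range (k + 1), f j * g (k - j)

/-- n-fold convolution of a pmf on ℕ: the law of a sum of n i.i.d. copies. -/
noncomputable def iterConv (f : ℕ → ℝ≥0∞) : ℕ → ℕ → ℝ≥0∞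
  | 0 => fun k => if k = 0 then 1 else 0
  | n + 1 => convAdd (iterConv f n) f

/-- μ is the law of an ℕ-valued random variable X satisfying the RDE
    X =_d P + ∑_{i=1}^N (X_i - 1)⁺, with P ~ Poisson(α), N ~ Geom(1/2),
    X_i i.i.d. with law μ, all independent. -/
def SatisfiesRDE (α : ℝ) (μ : ℕ → ℝ≥0∞) : Prop :=
  (∑' k, μ k) = 1 ∧
  ∀ k, μ k = ∑' n, geomHalf n * convAdd (poissonPMF α) (iterConv (shiftLaw μ) n) k

/-- The probability generating function G(s) = E[s^X]. -/
noncomputable def pgf (μ : ℕ → ℝ≥0∞) (s : ℝ) : ℝ := ∑' k, (μ k).toReal * s ^ k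

/-- The mean E[X] = ∑ k · P(X = k), valued in [0,∞]. -/
noncomputable def meanENN (μ : ℕ → ℝ≥0∞) : ℝ≥0∞ := ∑' k : ℕ, (k : ℝ≥0∞) * μ k

/-!
Taking generating functions, the equation becomes `G = e^{α(s-1)} / (2 - H)`, where `H` is the
generating function of `(X - 1)⁺`, and `s H = G - p + p s`. Eliminating `H` shows that `G(s)` is a
root of `x² - ((2 - p) s + p) x + s e^{α(s-1)}`. Since `G(s) ≥ p` while the midpoint of the two
roots tends to `p / 2 < p` as `s → 0`, it is the larger root `Q₊(s)` for small `s`. Generating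
functions are first taken in `ℝ≥0∞`, where every interchange of sums is unconditional.
-/

open Finset

theorem ENNReal.tsum_mul_tsum_eq_tsum_sum_range (f g : ℕ → ℝ≥0∞) :
    (∑' n, f n) * ∑' n, g n = ∑' n, ∑ k ∈ range (n + 1), f k * g (n - k) := by
  simp_rw [← Nat.sum_antidiagonal_eq_sum_range_succ fun k l => f k * g l,
    ← ENNReal.tsum_mul_right, ← ENNReal.tsum_mul_left]
  rw [← ENNReal.tsum_prod, ← HasAntidiagonal.sigmaAntidiagonalEquivProd.tsum_eq,
    ENNReal.tsum_sigma']
  exact tsum_congr fun n => Finset.tsum_subtype (antidiagonal n) fun ij => f ij.1 * g ij.2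

noncomputable def genFun (f : ℕ → ℝ≥0∞) (t : ℝ≥0∞) : ℝ≥0∞ := ∑' k, f k * t ^ k

lemma genFun_le_tsum (f : ℕ → ℝ≥0∞) {t : ℝ≥0∞} (ht : t ≤ 1) : genFun f t ≤ ∑' k, f k :=
  ENNReal.tsum_le_tsum fun k => mul_le_of_le_one_right' (pow_le_one' ht k)

lemma apply_zero_le_genFun (f : ℕ → ℝ≥0∞) (t : ℝ≥0∞) : f 0 ≤ genFun f t := by
  rw [genFun]
  simpa using ENNReal.le_tsum (f := fun k => f k * t ^ k) 0

lemma genFun_convAdd (f g : ℕ → ℝ≥0∞) (t : ℝ≥0∞) :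
    genFun (convAdd f g) t = genFun f t * genFun g t := by
  rw [genFun, genFun, genFun, ENNReal.tsum_mul_tsum_eq_tsum_sum_range]
  refine tsum_congr fun n => ?_
  rw [convAdd, sum_mul]
  refine sum_congr rfl fun k hk => ?_
  rw [← Nat.add_sub_cancel' (Nat.lt_succ_iff.mp (mem_range.mp hk)), pow_add,
    Nat.add_sub_cancel_left]
  ring

lemma genFun_iterConv (f : ℕ → ℝ≥0∞) (t : ℝ≥0∞) (n : ℕ) :
    genFun (iterConv f n) t = genFun f t ^ n := by
  induction n with
  | zero => simp [genFun, iterConv, tsum_ite_eq]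
  | succ n ih => rw [iterConv, genFun_convAdd, ih, pow_succ]

lemma genFun_poissonPMF {α s : ℝ} (hα : 0 ≤ α) (hs : 0 ≤ s) :
    genFun (poissonPMF α) (ENNReal.ofReal s) = ENNReal.ofReal (Real.exp (α * (s - 1))) := by
  have hterm (k : ℕ) : poissonPMF α k * ENNReal.ofReal s ^ k
      = ENNReal.ofReal (Real.exp (-α) * ((α * s) ^ k / k.factorial)) := by
    rw [poissonPMF, ← ENNReal.ofReal_pow hs, ← ENNReal.ofReal_mul (by positivity)]
    congr 1
    ring
  simp_rw [genFun, hterm]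
  rw [← ENNReal.ofReal_tsum_of_nonneg (fun k => by positivity)
    ((Real.summable_pow_div_factorial (α * s)).mul_left _), tsum_mul_left,
    ← congrFun (NormedSpace.exp_eq_tsum_div (𝔸 := ℝ)), ← Real.exp_eq_exp_ℝ, ← Real.exp_add]
  ring_nf

lemma tsum_geomHalf_mul_pow (x : ℝ≥0∞) : ∑' n, geomHalf n * x ^ n = (2 - x)⁻¹ := by
  have h (n : ℕ) : geomHalf n * x ^ n = 2⁻¹ * (x / 2) ^ n := by
    rw [geomHalf, one_div, pow_succ, div_eq_mul_inv, mul_pow]; ring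
  simp_rw [h]
  rw [ENNReal.tsum_mul_left, ENNReal.tsum_geometric, ← ENNReal.mul_inv (by simp) (by simp),
    ENNReal.mul_sub (by simp), mul_one, ENNReal.mul_div_cancel (by simp) (by simp)]

lemma tsum_shiftLaw (μ : ℕ → ℝ≥0∞) : ∑' k, shiftLaw μ k = ∑' k, μ k := by
  rw [tsum_eq_zero_add' (f := shiftLaw μ) ENNReal.summable, tsum_eq_zero_add' (f := μ)
    ENNReal.summable, tsum_eq_zero_add' (f := fun k => μ (k + 1)) ENNReal.summable]
  simp [shiftLaw, add_assoc]

lemma mul_genFun_shiftLaw_add (μ : ℕ → ℝ≥0∞) (t : ℝ≥0∞) :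
    t * genFun (shiftLaw μ) t + μ 0 = μ 0 * t + genFun μ t := by
  rw [genFun, genFun, tsum_eq_zero_add' (f := fun k => shiftLaw μ k * t ^ k) ENNReal.summable,
    tsum_eq_zero_add' (f := fun k => μ k * t ^ k) ENNReal.summable,
    tsum_eq_zero_add' (f := fun k => μ (k + 1) * t ^ (k + 1)) ENNReal.summable]
  simp only [shiftLaw, if_true, Nat.add_eq_zero_iff, one_ne_zero, and_false, if_false, pow_zero,
    mul_one, zero_add, pow_one, mul_add, ← ENNReal.tsum_mul_left]
  rw [tsum_congr fun k => (by ring :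
    t * (μ (k + 1 + 1) * t ^ (k + 1)) = μ (k + 1 + 1) * t ^ (k + 1 + 1))]
  ring

lemma pgf_eq_toReal_genFun {μ : ℕ → ℝ≥0∞} (hμ : ∀ k, μ k ≠ ∞) {s : ℝ} (hs : 0 ≤ s) :
    pgf μ s = (genFun μ (ENNReal.ofReal s)).toReal := by
  rw [genFun, ENNReal.tsum_toReal_eq fun k => ENNReal.mul_ne_top (hμ k) (by simp)]
  simp [pgf, ENNReal.toReal_ofReal hs]

lemma eq_half_mul_add_sqrt_of_sq_sub_mul_add_eq_zero {x b c : ℝ} (h : x ^ 2 - b * x + c = 0)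
    (hx : b ≤ 2 * x) : x = 1 / 2 * (b + √(b ^ 2 - 4 * c)) := by
  rw [show b ^ 2 - 4 * c = (2 * x - b) ^ 2 by linear_combination (-4) * h,
    Real.sqrt_sq (by linarith)]
  ring

namespace SatisfiesRDE

variable {α : ℝ} {μ : ℕ → ℝ≥0∞} (hμ : SatisfiesRDE α μ)
include hμ

lemma genFun_eq (t : ℝ≥0∞) :
    genFun μ t = genFun (poissonPMF α) t * (2 - genFun (shiftLaw μ) t)⁻¹ := by
  calc genFun μ t
      = ∑' n, ∑' k, geomHalf n * (convAdd (poissonPMF α) (iterConv (shiftLaw μ) n) k * t ^ k) := by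
        rw [genFun, ENNReal.tsum_comm]
        refine tsum_congr fun k => ?_
        rw [hμ.2 k, ← ENNReal.tsum_mul_right]
        exact tsum_congr fun n => mul_assoc _ _ _
    _ = ∑' n, genFun (poissonPMF α) t * (geomHalf n * genFun (shiftLaw μ) t ^ n) := by
        refine tsum_congr fun n => ?_
        rw [ENNReal.tsum_mul_left, ← genFun, genFun_convAdd, genFun_iterConv]
        ring
    _ = _ := by rw [ENNReal.tsum_mul_left, tsum_geomHalf_mul_pow]

lemma apply_zero_pos : 0 < μ 0 := by
  calc 0 < geomHalf 0 * convAdd (poissonPMF α) (iterConv (shiftLaw μ) 0) 0 := by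
        simp [geomHalf, convAdd, iterConv, poissonPMF, Real.exp_pos]
    _ ≤ μ 0 := hμ.2 0 ▸ ENNReal.le_tsum 0

lemma apply_ne_top (k : ℕ) : μ k ≠ ∞ :=
  ENNReal.ne_top_of_tsum_ne_top (hμ.1 ▸ ENNReal.one_ne_top) k

lemma shiftLaw_ne_top (k : ℕ) : shiftLaw μ k ≠ ∞ :=
  ENNReal.ne_top_of_tsum_ne_top ((tsum_shiftLaw μ).trans hμ.1 ▸ ENNReal.one_ne_top) k

lemma genFun_le_one {t : ℝ≥0∞} (ht : t ≤ 1) : genFun μ t ≤ 1 :=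
  (genFun_le_tsum μ ht).trans_eq hμ.1

lemma genFun_shiftLaw_le_one {t : ℝ≥0∞} (ht : t ≤ 1) : genFun (shiftLaw μ) t ≤ 1 :=
  (genFun_le_tsum _ ht).trans_eq ((tsum_shiftLaw μ).trans hμ.1)

variable {s : ℝ} (hs₀ : 0 ≤ s) (hs₁ : s ≤ 1)
include hs₀ hs₁

lemma pgf_mul_two_sub_pgf_shiftLaw (hα : 0 ≤ α) :
    pgf μ s * (2 - pgf (shiftLaw μ) s) = Real.exp (α * (s - 1)) := by
  have ht : ENNReal.ofReal s ≤ 1 := ENNReal.ofReal_le_one.mpr hs₁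
  have hH := hμ.genFun_shiftLaw_le_one ht
  rw [pgf_eq_toReal_genFun hμ.apply_ne_top hs₀, pgf_eq_toReal_genFun hμ.shiftLaw_ne_top hs₀,
    hμ.genFun_eq, genFun_poissonPMF hα hs₀, ENNReal.toReal_mul, ENNReal.toReal_inv,
    ENNReal.toReal_sub_of_le (hH.trans one_le_two) ENNReal.ofNat_ne_top,
    ENNReal.toReal_ofReal (Real.exp_pos _).le, ENNReal.toReal_ofNat]
  have hH' : (genFun (shiftLaw μ) (ENNReal.ofReal s)).toReal ≤ 1 :=
    ENNReal.toReal_le_of_le_ofReal zero_le_one (by simpa using hH)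
  field_simp [show 2 - (genFun (shiftLaw μ) (ENNReal.ofReal s)).toReal ≠ 0 by linarith]

lemma mul_pgf_shiftLaw_add :
    s * pgf (shiftLaw μ) s + (μ 0).toReal = (μ 0).toReal * s + pgf μ s := by
  have ht : ENNReal.ofReal s ≤ 1 := ENNReal.ofReal_le_one.mpr hs₁
  have hG := (hμ.genFun_le_one ht).trans_lt ENNReal.one_lt_top
  have hH := (hμ.genFun_shiftLaw_le_one ht).trans_lt ENNReal.one_lt_top
  have := congrArg ENNReal.toReal (mul_genFun_shiftLaw_add μ (ENNReal.ofReal s))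
  rwa [ENNReal.toReal_add (ENNReal.mul_ne_top ENNReal.ofReal_ne_top hH.ne) (hμ.apply_ne_top 0),
    ENNReal.toReal_add (ENNReal.mul_ne_top (hμ.apply_ne_top 0) ENNReal.ofReal_ne_top) hG.ne,
    ENNReal.toReal_mul, ENNReal.toReal_mul,
    ENNReal.toReal_ofReal hs₀, ← pgf_eq_toReal_genFun hμ.apply_ne_top hs₀,
    ← pgf_eq_toReal_genFun hμ.shiftLaw_ne_top hs₀] at this

lemma toReal_apply_zero_le_pgf : (μ 0).toReal ≤ pgf μ s := by
  rw [pgf_eq_toReal_genFun hμ.apply_ne_top hs₀]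
  exact ENNReal.toReal_mono ((hμ.genFun_le_one (ENNReal.ofReal_le_one.mpr hs₁)).trans_lt
    ENNReal.one_lt_top).ne (apply_zero_le_genFun μ _)

end SatisfiesRDE

theorem pgf_eq_Qplus_near_zero_general
    (α : ℝ) (hα0 : 0 < α)
    (μ : ℕ → ℝ≥0∞) (hμ : SatisfiesRDE α μ)
    (p : ℝ) (hp : p = (μ 0).toReal) :
    ∃ ε > (0 : ℝ), ∀ s ∈ Set.Ioo (0 : ℝ) ε,
      pgf μ s = (1 / 2) * ((2 - p) * s + p +
        Real.sqrt (((2 - p) * s + p) ^ 2 - 4 * s * Real.exp (α * (s - 1)))) := by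
  have hp₀ : 0 < p := hp ▸ ENNReal.toReal_pos hμ.apply_zero_pos.ne' (hμ.apply_ne_top 0)
  have hp₁ : p ≤ 1 := hp ▸ ENNReal.toReal_le_of_le_ofReal zero_le_one
    (by simpa [hμ.1] using ENNReal.le_tsum (f := μ) 0)
  refine ⟨min (p / (2 - p)) 1, lt_min (div_pos hp₀ (by linarith)) one_pos, ?_⟩
  rintro s ⟨hs₀, hsε⟩
  have hs₁ : s ≤ 1 := (hsε.trans_le (min_le_right _ _)).le
  have hsp : (2 - p) * s < p := (lt_div_iff₀' (by linarith)).mp (hsε.trans_le (min_le_left _ _))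
  have hRDE := hμ.pgf_mul_two_sub_pgf_shiftLaw hs₀.le hs₁ hα0.le
  have hshift := hμ.mul_pgf_shiftLaw_add hs₀.le hs₁
  have hpG := hμ.toReal_apply_zero_le_pgf hs₀.le hs₁
  subst hp
  rw [mul_assoc 4 s]
  refine eq_half_mul_add_sqrt_of_sq_sub_mul_add_eq_zero ?_ (by linarith)
  linear_combination (-s) * hRDE - pgf μ s * hshift

/-- For α ∈ (0,1), there exists ε > 0 such that G(s) = Q₊(s) for all
s ∈ (0, ε). -/
theorem pgf_eq_Qplus_near_zero
    (α : ℝ) (hα0 : 0 < α) (hα1 : α < 1)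
    (μ : ℕ → ℝ≥0∞) (hμ : SatisfiesRDE α μ)
    (p : ℝ) (hp : p = (μ 0).toReal) :
    ∃ ε > (0 : ℝ), ∀ s ∈ Set.Ioo (0 : ℝ) ε,
      pgf μ s = (1 / 2) * ((2 - p) * s + p +
        Real.sqrt (((2 - p) * s + p) ^ 2 - 4 * s * Real.exp (α * (s - 1)))) :=
  pgf_eq_Qplus_near_zero_general α hα0 μ hμ p hp
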